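/- arXiv:2402.02114 — 2 statements merged into one kernel-verified Lean document; each statement's English description precedes it below -/
import Mathlib

section
/- Under the hypotheses of the one-step Frank-Wolfe descent inequality, define h_{t,k} = f_t(x_{t,k+1}) - f_t(x*), let A = max(3, G/(βD)) where G bounds the gradient norms, and η_k = min(1, A/k). Then for every k ∈ {1,...,K}, h_{t,k} ≤ 2βAD²/k + ∑_{k'=1}^{k} η_{k'} (∏_{ℓ=k'+1}^{k} (1-η_ℓ)) ⟨∇f_t(x_{t,k'}), v_{t,k'} - x*⟩. -/
open Finset
open scoped RealInnerProductSpace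

theorem stmt_3 {d : ℕ} (K : Set (EuclideanSpace ℝ (Fin d))) (hK : Convex ℝ K)
    (D β G : ℝ) (hD : 0 < D) (hβ : 0 < β) (hG : 0 < G)
    (f : EuclideanSpace ℝ (Fin d) → ℝ) (f' : EuclideanSpace ℝ (Fin d) → EuclideanSpace ℝ (Fin d))
    (hdiam : ∀ x ∈ K, ∀ y ∈ K, ‖x - y‖ ≤ D)
    (hsmooth : ∀ x ∈ K, ∀ y ∈ K,
      f y ≤ f x + ⟪f' x, y - x⟫ + β / 2 * ‖y - x‖ ^ 2)
    (hconvf : ∀ x ∈ K, ∀ y ∈ K, f x + ⟪f' x, y - x⟫ ≤ f y)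
    (hgrad : ∀ x ∈ K, ‖f' x‖ ≤ G)
    (A : ℝ) (hA : A = max 3 (G / (β * D)))
    (η : ℕ → ℝ) (hη : ∀ k, η k = min 1 (A / k))
    (xstar : EuclideanSpace ℝ (Fin d)) (hxstar : xstar ∈ K)
    (x v : ℕ → EuclideanSpace ℝ (Fin d))
    (hx1 : x 1 ∈ K) (hv : ∀ k, v k ∈ K)
    (hupd : ∀ k, 1 ≤ k → x (k + 1) = (1 - η k) • x k + η k • v k) :
    ∀ k, 1 ≤ k →
      f (x (k + 1)) - f xstar ≤ 2 * β * A * D ^ 2 / k +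
        ∑ k' ∈ Finset.Icc 1 k, η k' * (∏ ℓ ∈ Finset.Icc (k' + 1) k, (1 - η ℓ)) *
          ⟪f' (x k'), v k' - xstar⟫ := by
  have hA3 : (3:ℝ) ≤ A := by rw [hA]; exact le_max_left _ _
  have hβD2 : 0 < β * D ^ 2 := by positivity
  -- bounds on η
  have hη01 : ∀ m : ℕ, 1 ≤ m → 0 ≤ η m ∧ η m ≤ 1 := by
    intro m hm
    have hm' : (0:ℝ) < m := by exact_mod_cast hm
    rw [hη]
    exact ⟨le_min zero_le_one (by positivity), min_le_left _ _⟩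
  -- membership of iterates
  have hxK : ∀ m : ℕ, 1 ≤ m → x m ∈ K := by
    intro m hm
    induction m with
    | zero => omega
    | succ n ih =>
      rcases Nat.lt_or_ge n 1 with h | hn
      · have : n = 0 := by omega
        subst this; exact hx1
      · obtain ⟨h0, h1⟩ := hη01 n hn
        rw [hupd n hn]
        exact hK (ih hn) (hv n) (by linarith) h0 (by ring)
  -- one-step inequality
  have hstep : ∀ m, 1 ≤ m →
      f (x (m + 1)) - f xstar ≤ (1 - η m) * (f (x m) - f xstar)
        + η m * ⟪f' (x m), v m - xstar⟫ + η m ^ 2 * (β * D ^ 2) / 2 := by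
    intro m hm
    obtain ⟨h0, h1⟩ := hη01 m hm
    have hxm := hxK m hm
    have hxm1 := hxK (m + 1) (by omega)
    have hdiff : x (m + 1) - x m = η m • (v m - x m) := by
      rw [hupd m hm]; module
    have hs := hsmooth (x m) hxm (x (m + 1)) hxm1
    rw [hdiff, real_inner_smul_right] at hs
    have hnorm : ‖η m • (v m - x m)‖ ^ 2 = η m ^ 2 * ‖v m - x m‖ ^ 2 := by
      rw [norm_smul, Real.norm_eq_abs, mul_pow, sq_abs]
    rw [hnorm] at hs
    have hD' : ‖v m - x m‖ ≤ D := hdiam _ (hv m) _ hxm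
    have hDsq : ‖v m - x m‖ ^ 2 ≤ D ^ 2 := by
      nlinarith [norm_nonneg (v m - x m)]
    have hsplit : ⟪f' (x m), v m - x m⟫
        = ⟪f' (x m), v m - xstar⟫ + ⟪f' (x m), xstar - x m⟫ := by
      have h : v m - x m = (v m - xstar) + (xstar - x m) := by abel
      rw [h, inner_add_right]
    rw [hsplit] at hs
    have hc : ⟪f' (x m), xstar - x m⟫ ≤ f xstar - f (x m) := by
      linarith [hconvf (x m) hxm xstar hxstar]
    have hc' : η m * ⟪f' (x m), xstar - x m⟫ ≤ η m * (f xstar - f (x m)) :=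
      mul_le_mul_of_nonneg_left hc h0
    have hn' : η m ^ 2 * ‖v m - x m‖ ^ 2 ≤ η m ^ 2 * D ^ 2 :=
      mul_le_mul_of_nonneg_left hDsq (sq_nonneg _)
    nlinarith [hs, hc', hn', mul_le_mul_of_nonneg_left hn' (le_of_lt (half_pos hβ))]
  -- key arithmetic step
  have harith : ∀ m : ℕ, 1 ≤ m →
      (1 - η (m + 1)) * (2 * β * A * D ^ 2 / m) + η (m + 1) ^ 2 * (β * D ^ 2) / 2
        ≤ 2 * β * A * D ^ 2 / (m + 1 : ℕ) := by
    intro m hm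
    have hm1 : (1:ℝ) ≤ (m:ℝ) := by exact_mod_cast hm
    have hN : (0:ℝ) < (m:ℝ) + 1 := by linarith
    push_cast
    have hM : (0:ℝ) < (m:ℝ) := by linarith
    rcases le_or_gt ((m:ℝ) + 1) A with hcase | hcase
    · have hη1 : η (m + 1) = 1 := by
        rw [hη]; push_cast
        exact min_eq_left (by rw [le_div_iff₀ hN]; linarith)
      rw [hη1, le_div_iff₀ hN]
      nlinarith [hβD2, mul_le_mul_of_nonneg_right hcase hβD2.le]
    · have hη2 : η (m + 1) = A / ((m:ℝ) + 1) := by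
        rw [hη]; push_cast
        exact min_eq_right (by rw [div_le_one hN]; linarith)
      rw [hη2, ← sub_nonneg]
      have hEq : 2 * β * A * D ^ 2 / ((m:ℝ) + 1) -
          ((1 - A / ((m:ℝ) + 1)) * (2 * β * A * D ^ 2 / (m:ℝ))
            + (A / ((m:ℝ) + 1)) ^ 2 * (β * D ^ 2) / 2)
          = β * D ^ 2 * A * (4 * ((m:ℝ) + 1) * (A - 1) - A * (m:ℝ))
            / (2 * (m:ℝ) * ((m:ℝ) + 1) ^ 2) := by
        field_simp
        ring
      rw [hEq]
      have hnum : (0:ℝ) ≤ 4 * ((m:ℝ) + 1) * (A - 1) - A * (m:ℝ) := by nlinarith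
      apply div_nonneg _ (by positivity)
      have hAnn : (0:ℝ) ≤ A := by linarith
      positivity
  -- main induction
  intro k hk
  induction k, hk using Nat.le_induction with
  | base =>
    rw [Finset.Icc_self, Finset.sum_singleton,
      Finset.Icc_eq_empty (by omega : ¬ (1 + 1 ≤ 1)), Finset.prod_empty, mul_one]
    have hη1 : η 1 = 1 := by
      rw [hη]; norm_num; linarith
    have h1 := hstep 1 (by norm_num)
    rw [hη1] at h1
    norm_num at h1 ⊢
    rw [hη1]
    nlinarith [hβD2, hA3]
  | succ m hm ih =>
    have h1 := hstep (m + 1) (by omega)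
    obtain ⟨h0, hle1⟩ := hη01 (m + 1) (by omega)
    have hmul : (1 - η (m + 1)) * (f (x (m + 1)) - f xstar)
        ≤ (1 - η (m + 1)) * (2 * β * A * D ^ 2 / m +
          ∑ k' ∈ Finset.Icc 1 m, η k' * (∏ ℓ ∈ Finset.Icc (k' + 1) m, (1 - η ℓ)) *
            ⟪f' (x k'), v k' - xstar⟫) :=
      mul_le_mul_of_nonneg_left ih (by linarith)
    have hSrec : ∑ k' ∈ Finset.Icc 1 (m + 1), η k' *
          (∏ ℓ ∈ Finset.Icc (k' + 1) (m + 1), (1 - η ℓ)) * ⟪f' (x k'), v k' - xstar⟫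
        = (1 - η (m + 1)) * (∑ k' ∈ Finset.Icc 1 m, η k' *
            (∏ ℓ ∈ Finset.Icc (k' + 1) m, (1 - η ℓ)) * ⟪f' (x k'), v k' - xstar⟫)
          + η (m + 1) * ⟪f' (x (m + 1)), v (m + 1) - xstar⟫ := by
      rw [Finset.sum_Icc_succ_top (by omega : 1 ≤ m + 1),
        Finset.Icc_eq_empty (by omega : ¬ (m + 1 + 1 ≤ m + 1)), Finset.prod_empty, mul_one,
        Finset.mul_sum]
      congr 1
      apply Finset.sum_congr rfl
      intro i hi
      have hi' : i + 1 ≤ m + 1 := by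
        have := (Finset.mem_Icc.mp hi).2; omega
      rw [Finset.prod_Icc_succ_top hi']
      ring
    have ha := harith m hm
    rw [hSrec]
    linarith [ha, hmul, h1]
end

section
/- Let (h_k)_{k≥0} be a real sequence with h_0 ≤ GD, and suppose h_k ≤ (1-η_k)h_{k-1} + η_k c_k + η_k² βD²/2 for k ≥ 1, where η_k = min(1, A/k), A = max(3, G/(βD)), and c_k ∈ ℝ. Then for all k ≥ 1: h_k ≤ 2βAD²/k + ∑_{k'=1}^k η_{k'} (∏_{ℓ=k'+1}^k (1-η_ℓ)) c_{k'}. -/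
open Finset

lemma aux19 (β D A N : ℝ) (hβ : 0 < β) (hD : 0 < D) (hA : 3 ≤ A) (hN : 2 ≤ N) :
    (1 - min 1 (A/N)) * (2*β*A*D^2/(N-1)) + (min 1 (A/N))^2 * β * D^2 / 2 ≤ 2*β*A*D^2/N := by
  have hN0 : 0 < N := by linarith
  have hN1 : 0 < N - 1 := by linarith
  have hD2 : 0 < D^2 := pow_pos hD 2
  rcases le_total (A/N) 1 with hc | hc
  · rw [min_eq_right hc]
    have hAN : A ≤ N := (div_le_one hN0).mp hc
    rw [← sub_nonneg]
    have hid : 2*β*A*D^2/N - ((1 - A/N) * (2*β*A*D^2/(N-1)) + (A/N)^2 * β * D^2 / 2)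
        = β*A*D^2*(3*A*N + A - 4*N)/(2*N^2*(N-1)) := by
      field_simp
      ring
    rw [hid]
    apply div_nonneg _ (by positivity)
    have : 0 ≤ 3*A*N + A - 4*N := by nlinarith
    positivity
  · rw [min_eq_left hc]
    have hAN : N ≤ A := by
      have := (one_le_div hN0).mp hc; linarith
    have h1 : 2*β*D^2 ≤ 2*β*A*D^2/N := by
      rw [le_div_iff₀ hN0]
      nlinarith [mul_nonneg (mul_nonneg hβ.le hD2.le) (sub_nonneg.mpr hAN)]
    nlinarith

theorem stmt_19 (G D β : ℝ) (hG : 0 < G) (hD : 0 < D) (hβ : 0 < β)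
    (A : ℝ) (hA : A = max 3 (G / (β * D)))
    (η : ℕ → ℝ) (hη : ∀ k, η k = min 1 (A / k))
    (h c : ℕ → ℝ) (h0 : h 0 ≤ G * D)
    (hrec : ∀ k, 1 ≤ k → h k ≤ (1 - η k) * h (k - 1) + η k * c k + (η k) ^ 2 * β * D ^ 2 / 2) :
    ∀ k, 1 ≤ k →
      h k ≤ 2 * β * A * D ^ 2 / k +
        ∑ k' ∈ Finset.Icc 1 k, η k' * (∏ ℓ ∈ Finset.Icc (k' + 1) k, (1 - η ℓ)) * c k' := by
  have hA3 : 3 ≤ A := hA ▸ le_max_left _ _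
  intro k hk
  induction k, hk using Nat.le_induction with
  | base =>
    have hη1 : η 1 = 1 := by
      rw [hη]; norm_num; linarith
    have hr := hrec 1 le_rfl
    rw [hη1] at hr
    rw [Finset.Icc_self, Finset.sum_singleton, Finset.Icc_eq_empty (by omega),
      Finset.prod_empty, hη1]
    norm_num
    nlinarith [mul_pos hβ (pow_pos hD 2)]
  | succ k hk ih =>
    have hηle : η (k+1) ≤ 1 := by rw [hη]; exact min_le_left _ _
    have hηnn : 0 ≤ η (k+1) := by
      rw [hη]; exact le_min one_pos.le (by positivity)
    have hk0 : (0:ℝ) < k := by exact_mod_cast hk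
    have hk1 : (1:ℝ) ≤ k := by exact_mod_cast hk
    set S := ∑ k' ∈ Finset.Icc 1 k, η k' * (∏ ℓ ∈ Finset.Icc (k' + 1) k, (1 - η ℓ)) * c k' with hS
    have key : ∑ k' ∈ Finset.Icc 1 (k+1), η k' * (∏ ℓ ∈ Finset.Icc (k' + 1) (k+1), (1 - η ℓ)) * c k'
        = (1 - η (k+1)) * S + η (k+1) * c (k+1) := by
      rw [Finset.sum_Icc_succ_top (by omega : 1 ≤ k+1)]
      have hempty : Finset.Icc (k+1+1) (k+1) = ∅ := Finset.Icc_eq_empty (by omega)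
      rw [hempty, Finset.prod_empty, mul_one]
      congr 1
      rw [hS, Finset.mul_sum]
      apply Finset.sum_congr rfl
      intro x hx
      have hx' : x + 1 ≤ k + 1 := by
        have := (Finset.mem_Icc.mp hx).2; omega
      rw [Finset.prod_Icc_succ_top hx']
      ring
    rw [key]
    have hr := hrec (k+1) (by omega)
    simp only [Nat.add_sub_cancel] at hr
    have step : (1 - η (k+1)) * h k ≤ (1 - η (k+1)) * (2 * β * A * D ^ 2 / k) + (1 - η (k+1)) * S := by
      calc (1 - η (k+1)) * h k ≤ (1 - η (k+1)) * (2 * β * A * D ^ 2 / k + S) :=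
            mul_le_mul_of_nonneg_left ih (by linarith)
        _ = _ := mul_add _ _ _
    have arith : (1 - η (k+1)) * (2 * β * A * D ^ 2 / k) + (η (k+1))^2 * β * D^2 / 2
        ≤ 2 * β * A * D ^ 2 / (k+1:ℕ) := by
      have hηval : η (k+1) = min 1 (A / ((k:ℝ)+1)) := by
        rw [hη]; push_cast; ring_nf
      have := aux19 β D A ((k:ℝ)+1) hβ hD hA3 (by linarith)
      rw [hηval]
      push_cast
      simpa using this
    push_cast at arith ⊢
    linarith [step, hr, arith]
end
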